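/- Let u = (u₁,u₂) and v = (v₁,v₂) be two non-collinear nonzero vectors of ℤ². Then every (u,v)-self-avoiding path P is finite, and its length is bounded by a quantity depending only on ‖u‖ and ‖v‖; in particular |P| ≤ |u₁v₂ − u₂v₁|, the number of points of ℤ² in a fundamental parallelogram of the lattice generated by u and v. -/

import Mathlib

/-! ## The abstract tile assembly model at temperature 1 -/

structure Glue where
  label : ℕ
  strength : ℕ
deriving DecidableEq

instance : Inhabited Glue := ⟨⟨0, 0⟩⟩

/-- A tile type: a unit square with a glue on each of its four sides. -/
structure TileType where
  north : Glue
  east : Glue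
  south : Glue
  west : Glue
deriving DecidableEq

instance : Inhabited TileType := ⟨⟨default, default, default, default⟩⟩

/-- Positions of the discrete plane `ℤ²`. -/
abbrev Pos : Type := ℤ × ℤ

/-- A tile is a position together with a tile type. -/
abbrev Tile : Type := Pos × TileType

/-- Two equal glues bind iff their common strength is at least 1. -/
def glueBind (g g' : Glue) : Prop := g = g' ∧ 1 ≤ g.strength

/-- Two tiles interact (bind) if they are at adjacent positions and the glues on
their abutting sides are equal with strength at least 1. -/
def interact (a b : Tile) : Prop :=
  (b.1 = (a.1.1, a.1.2 + 1) ∧ glueBind a.2.north b.2.south) ∨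
  (b.1 = (a.1.1 + 1, a.1.2) ∧ glueBind a.2.east b.2.west) ∨
  (b.1 = (a.1.1, a.1.2 - 1) ∧ glueBind a.2.south b.2.north) ∨
  (b.1 = (a.1.1 - 1, a.1.2) ∧ glueBind a.2.west b.2.east)

/-- An assembly: a partial function from `ℤ²` to tile types. -/
abbrev Assembly : Type := Pos → Option TileType

/-- The domain of an assembly. -/
def adom (α : Assembly) : Set Pos := {p | α p ≠ none}

/-- Translation of an assembly by a vector: `(α + v)(x) = α (x - v)`. -/
def translateA (α : Assembly) (v : Pos) : Assembly := fun p => α (p - v)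

/-- Adjacency in `ℤ²`. -/
def adjacent (p q : Pos) : Prop := (p.1 - q.1).natAbs + (p.2 - q.2).natAbs = 1

/-- The domain of the assembly is a connected subset of `ℤ²`. -/
def ConnectedDom (α : Assembly) : Prop :=
  ∀ p q, p ∈ adom α → q ∈ adom α →
    Relation.ReflTransGen (fun a b => a ∈ adom α ∧ b ∈ adom α ∧ adjacent a b) p q

/-- Two occupied positions of an assembly are bound. -/
def bindsIn (α : Assembly) (p q : Pos) : Prop :=
  ∃ t t', α p = some t ∧ α q = some t' ∧ interact (p, t) (q, t')

/-- Stability at temperature 1: the binding graph is connected (every cut has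
weight at least 1). -/
def StableA (α : Assembly) : Prop :=
  ConnectedDom α ∧ ∀ p q, p ∈ adom α → q ∈ adom α → Relation.ReflTransGen (bindsIn α) p q

/-- `β` is obtained from `α` by the stable binding of a single tile of type from `T`. -/
def Attaches (T : Finset TileType) (α β : Assembly) : Prop :=
  ∃ p t, t ∈ T ∧ α p = none ∧ β p = some t ∧ (∀ q, q ≠ p → β q = α q) ∧
    ∃ q t', α q = some t' ∧ interact (p, t) (q, t')

/-- `α` is producible from the seed `σ`: it is the union of a (possibly infinite)
sequence of single-tile additions starting from `σ`. -/
def Producible (T : Finset TileType) (σ α : Assembly) : Prop :=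
  ∃ f : ℕ → Assembly, f 0 = σ ∧
    (∀ n, f (n + 1) = f n ∨ Attaches T (f n) (f (n + 1))) ∧
    (∀ p t, α p = some t ↔ ∃ n, f n p = some t)

/-- `α` is a terminal assembly of the system `(T, σ, 1)`. -/
def Terminal (T : Finset TileType) (σ α : Assembly) : Prop :=
  Producible T σ α ∧ ∀ β, ¬ Attaches T α β

/-- The seed is an assembly over `T` which is stable at temperature 1. -/
def SeedOk (T : Finset TileType) (σ : Assembly) : Prop :=
  (∀ p t, σ p = some t → t ∈ T) ∧ StableA σ

/-- `α` is `v`-periodic. -/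
def PeriodicA (α : Assembly) (v : Pos) : Prop := v ≠ 0 ∧ translateA α v = α

/-- Collinearity of two vectors of `ℤ²`. -/
def Collin (u v : Pos) : Prop := u.1 * v.2 = u.2 * v.1

/-- `α` is bi-periodic: periodic for two non-collinear vectors. -/
def BiPeriodicA (α : Assembly) : Prop :=
  ∃ u v : Pos, ¬ Collin u v ∧ PeriodicA α u ∧ PeriodicA α v

/-- `α` is simply periodic: periodic but not bi-periodic. -/
def SimplyPeriodicA (α : Assembly) : Prop := (∃ v, PeriodicA α v) ∧ ¬ BiPeriodicA α

/-- `α` is aperiodic. -/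
def AperiodicA (α : Assembly) : Prop := ¬ ∃ v, PeriodicA α v

/-- Complexity of an assembly: a finite assembly has complexity 0; for `i ≥ 1` an
assembly has complexity `i` if it is `⋃_{ℓ ∈ ℕ} (β + ℓ v)` for some `β` of
complexity `i - 1`, or a finite union of assemblies of complexity less than `i`. -/
inductive HasComplexity : Assembly → ℕ → Prop
  | finite (α : Assembly) (h : (adom α).Finite) : HasComplexity α 0
  | pump (i : ℕ) (β : Assembly) (v : Pos) (α : Assembly) (hβ : HasComplexity β i)
      (hα : ∀ p t, α p = some t ↔ ∃ ℓ : ℕ, β (p - (ℓ : ℤ) • v) = some t) :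
      HasComplexity α (i + 1)
  | union (i n : ℕ) (f : Fin n → Assembly) (c : Fin n → ℕ) (hc : ∀ k, c k ≤ i)
      (hf : ∀ k, HasComplexity (f k) (c k)) (α : Assembly)
      (hα : ∀ p t, α p = some t ↔ ∃ k, f k p = some t) :
      HasComplexity α (i + 1)

/-! ## Paths -/

/-- A (finite, nonempty) path: a sequence of tiles with pairwise distinct positions
in which each consecutive pair of tiles interacts. -/
def IsPath (P : List Tile) : Prop :=
  P ≠ [] ∧ List.Chain' interact P ∧ (P.map Prod.fst).Nodup

/-- `P` is a path of `α`: `asm(P)` is a subassembly of `α`. -/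
def PathIn (α : Assembly) (P : List Tile) : Prop :=
  IsPath P ∧ ∀ a ∈ P, α a.1 = some a.2

/-- Translation of a tile. -/
def tTile (a : Tile) (w : Pos) : Tile := (a.1 + w, a.2)

/-- Translation of a path. -/
def translatePath (P : List Tile) (w : Pos) : List Tile := P.map (fun a => tTile a w)

/-- The `i`-th tile of a finite path. -/
def nth (P : List Tile) (i : ℕ) : Tile := P.getD i default

/-- The vector `pos(P_{|P|-1}) - pos(P₀)` of a finite path. -/
def pathVec (P : List Tile) : Pos := (nth P (P.length - 1)).1 - (nth P 0).1

/-- `P_{k mod (|P|-1)} + ⌊k / (|P|-1)⌋ • pathVec P`. -/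
def pumpTile (P : List Tile) (k : ℤ) : Tile :=
  tTile (nth P ((k % ((P.length : ℤ) - 1)).toNat)) ((k / ((P.length : ℤ) - 1)) • pathVec P)

/-- The pumping of `P`: an infinite sequence of tiles indexed by `ℕ`. -/
def pump (P : List Tile) (k : ℕ) : Tile := pumpTile P k

/-- The bi-pumping of `P`: a bi-infinite sequence of tiles indexed by `ℤ`. -/
def bipump (P : List Tile) (k : ℤ) : Tile := pumpTile P k

/-- `P` is a good candidate: `type(P₀) = type(P_{|P|-1})` and the only intersection
between `P` and `P + pathVec P` is the agreement of `P₀ + pathVec P` with `P_{|P|-1}`. -/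
def GoodCandidate (P : List Tile) : Prop :=
  2 ≤ P.length ∧ (nth P 0).2 = (nth P (P.length - 1)).2 ∧
  ∀ i j, i < P.length → j < P.length → (nth P i).1 + pathVec P = (nth P j).1 →
    i = 0 ∧ j = P.length - 1

/-- A one-way infinite path. -/
def IsInfPath (Q : ℕ → Tile) : Prop :=
  (∀ k, interact (Q k) (Q (k + 1))) ∧ Function.Injective fun k => (Q k).1

/-- A bi-infinite path. -/
def IsBiPath (Q : ℤ → Tile) : Prop :=
  (∀ k : ℤ, interact (Q k) (Q (k + 1))) ∧ Function.Injective fun k => (Q k).1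

/-- A one-way infinite path of `α`. -/
def InfPathIn (α : Assembly) (Q : ℕ → Tile) : Prop :=
  IsInfPath Q ∧ ∀ k, α (Q k).1 = some (Q k).2

/-- A bi-infinite path of `α`. -/
def BiPathIn (α : Assembly) (Q : ℤ → Tile) : Prop :=
  IsBiPath Q ∧ ∀ k, α (Q k).1 = some (Q k).2

/-- A good candidate `P` is pumpable (with respect to the terminal assembly `α`)
if `pump P ∈ P[α]`. -/
def Pumpable (α : Assembly) (P : List Tile) : Prop :=
  GoodCandidate P ∧ InfPathIn α (pump P)

/-- A good candidate `P` is bi-pumpable if `bipump P ∈ P[α]`. -/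
def BiPumpable (α : Assembly) (P : List Tile) : Prop :=
  GoodCandidate P ∧ BiPathIn α (bipump P)

/-- Simply pumpable: pumpable but not bi-pumpable. -/
def SimplyPumpable (α : Assembly) (P : List Tile) : Prop :=
  Pumpable α P ∧ ¬ BiPumpable α P

/-- A path without redundancy: two tiles share a tile type only if they are the
two extremities. -/
def NoRedundancy (P : List Tile) : Prop :=
  ∀ i j, i < j → j < P.length → (nth P i).2 = (nth P j).2 → i = 0 ∧ j = P.length - 1

/-- The single-tile assembly consisting of the tile `a`. -/
def singleTile (a : Tile) : Assembly := fun p => if p = a.1 then some a.2 else none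

/-- `Q` grows on the infinite path `R` at index `i`: the only intersection of `Q`
with `R` is at `pos(Q₀) = pos(R_i)` and is an agreement. -/
def GrowsOnPump (Q : List Tile) (R : ℕ → Tile) (i : ℕ) : Prop :=
  IsPath Q ∧ nth Q 0 = R i ∧
  ∀ k m, k < Q.length → (nth Q k).1 = (R m).1 → k = 0 ∧ m = i

/-- `Q` is an arc of the infinite path `R` between indices `i ≠ j`: the only
intersections of `Q` with `R` are agreements at its two extremities. -/
def IsArcOfPump (Q : List Tile) (R : ℕ → Tile) (i j : ℕ) : Prop :=
  IsPath Q ∧ i ≠ j ∧ nth Q 0 = R i ∧ nth Q (Q.length - 1) = R j ∧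
  (∀ k m, k < Q.length → (nth Q k).1 = (R m).1 →
    (k = 0 ∧ m = i) ∨ (k = Q.length - 1 ∧ m = j)) ∧
  (Q.length = 2 → j ≠ i + 1 ∧ i ≠ j + 1)

/-- `Q` is `v`-self-avoiding with respect to `α`: `Q` never intersects `Q + ℓ v` for
`ℓ ≥ 1`, and all large enough translations `Q + ℓ v` are paths of `α`. -/
def VSelfAvoiding (α : Assembly) (Q : List Tile) (v : Pos) : Prop :=
  (∀ ℓ : ℕ, 1 ≤ ℓ → ∀ a ∈ Q, ∀ b ∈ Q, a.1 ≠ b.1 + (ℓ : ℤ) • v) ∧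
  ∃ L : ℕ, ∀ ℓ : ℕ, L ≤ ℓ → PathIn α (translatePath Q ((ℓ : ℤ) • v))

/-! The positions of a `(u,v)`-self-avoiding path are pairwise incongruent modulo the lattice
`ℤu + ℤv`, and the quotient of `ℤ²` by this lattice has `|u₁v₂ - u₂v₁|` elements (the
determinant of a basis of the lattice computes its index). -/

open Module Submodule

theorem linearIndependent_of_not_collin {u v : Pos} (h : ¬ Collin u v) :
    LinearIndependent ℤ ![u, v] := by
  have hdet : u.1 * v.2 - u.2 * v.1 ≠ 0 := sub_ne_zero.2 h
  refine LinearIndependent.pair_iff.2 fun s t hst => ?_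
  obtain ⟨h₁, h₂⟩ := Prod.ext_iff.1 hst
  simp only [Prod.fst_add, Prod.snd_add, Prod.smul_fst, Prod.smul_snd, smul_eq_mul,
    Prod.fst_zero, Prod.snd_zero] at h₁ h₂
  have hs : s * (u.1 * v.2 - u.2 * v.1) = 0 := by linear_combination v.2 * h₁ - v.1 * h₂
  have ht : t * (u.1 * v.2 - u.2 * v.1) = 0 := by linear_combination u.1 * h₂ - u.2 * h₁
  exact ⟨(mul_eq_zero.1 hs).resolve_right hdet, (mul_eq_zero.1 ht).resolve_right hdet⟩

theorem card_quotient_span_of_not_collin {u v : Pos} (h : ¬ Collin u v) :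
    Nat.card (Pos ⧸ span ℤ {u, v}) = (u.1 * v.2 - u.2 * v.1).natAbs := by
  have hrange : Set.range ![u, v] = {u, v} := by
    rw [Matrix.range_cons, Matrix.range_cons, Matrix.range_empty]; simp [Set.pair_comm]
  rw [← hrange, ← natAbs_det_basis_change (Basis.finTwoProd ℤ) _
    (Basis.span (linearIndependent_of_not_collin h))]
  simp [Basis.det_apply, Matrix.det_fin_two, Basis.toMatrix_apply, Basis.span_apply, mul_comm]

theorem List.length_le_card_quotient_of_pairwise_sub_notMem {R M : Type*} [Ring R]
    [AddCommGroup M] [Module R M] (N : Submodule R M) [Finite (M ⧸ N)] {l : List M}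
    (hl : l.Pairwise fun x y => x - y ∉ N) : l.length ≤ Nat.card (M ⧸ N) := by
  have := Fintype.ofFinite (M ⧸ N)
  rw [← l.length_map N.mkQ, Nat.card_eq_fintype_card]
  exact List.Nodup.length_le_card <|
    List.pairwise_map.2 <| hl.imp fun h => mt (Submodule.Quotient.eq N).1 h

theorem self_avoiding_path_length_bound_general
    (u v : Pos) (hcol : ¬ Collin u v)
    (P : List Tile)
    (hnodup : (P.map Prod.fst).Nodup)
    (hsa : ∀ ℓ ℓ' : ℤ, (ℓ, ℓ') ≠ (0, 0) →
      ∀ a ∈ P, ∀ b ∈ P, a.1 ≠ b.1 + ℓ • u + ℓ' • v) :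
    P.length ≤ (u.1 * v.2 - u.2 * v.1).natAbs := by
  have hincongruent : (P.map Prod.fst).Pairwise fun x y => x - y ∉ span ℤ {u, v} := by
    refine hnodup.imp_of_mem fun hx hy hxy hmem => ?_
    obtain ⟨a, ha, rfl⟩ := List.mem_map.1 hx
    obtain ⟨b, hb, rfl⟩ := List.mem_map.1 hy
    obtain ⟨ℓ, ℓ', hℓ⟩ := mem_span_pair.1 hmem
    by_cases h0 : (ℓ, ℓ') = (0, 0)
    · obtain ⟨rfl, rfl⟩ := Prod.mk.inj h0
      exact hxy (by simpa [sub_eq_zero] using hℓ.symm)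
    · exact hsa ℓ ℓ' h0 a ha b hb (by rw [add_assoc, hℓ, add_sub_cancel])
  have hcard := card_quotient_span_of_not_collin hcol
  have : Finite (Pos ⧸ span ℤ {u, v}) :=
    Nat.finite_of_card_ne_zero (by rw [hcard]; exact Int.natAbs_ne_zero.2 (sub_ne_zero.2 hcol))
  simpa [hcard] using List.length_le_card_quotient_of_pairwise_sub_notMem _ hincongruent

/-- Every `(u,v)`-self-avoiding path, for non-collinear nonzero
vectors `u` and `v` of `ℤ²`, is finite with length at most
`|u₁ v₂ - u₂ v₁|`, the number of points of `ℤ²` in a fundamental parallelogram of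
the lattice generated by `u` and `v`. -/
theorem self_avoiding_path_length_bound
    (u v : Pos) (hu : u ≠ 0) (hv : v ≠ 0) (hcol : ¬ Collin u v)
    (P : List Tile)
    (hchain : List.Chain' (fun a b : Tile => adjacent a.1 b.1) P)
    (hnodup : (P.map Prod.fst).Nodup)
    (hsa : ∀ ℓ ℓ' : ℤ, (ℓ, ℓ') ≠ (0, 0) →
      ∀ a ∈ P, ∀ b ∈ P, a.1 ≠ b.1 + ℓ • u + ℓ' • v) :
    P.length ≤ (u.1 * v.2 - u.2 * v.1).natAbs :=
  self_avoiding_path_length_bound_general u v hcol P hnodup hsa
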